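/- Let D be a finite dataset in which the first-period choices x₁^k are pairwise distinct across observations. Then D is sophisticated rationalizable if and only if it satisfies Condition 2. -/

import Mathlib

/-!
Say that observation `s` is revealed worse than `t` when `x s ∈ B t` and the continuation menu of
`B t` at `(x s).1` is contained in that of `B s`. Then `x s`, being second-period optimal in the
larger menu, is optimal in the smaller one, so it lies in the sophisticated menu of `B t` and `x t`
must be strictly first-period preferred to it; Condition 2 says exactly that this relation is
acyclic. Conversely, if it is acyclic, let the first period rank the observed choices along a
linear extension of it (Szpilrajn) and everything else below them, and let the second period
prefer every point outside the observed continuation menus. Since first-period choices are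
distinct, `x s` then survives in the sophisticated menu of `B t` only when `s` is revealed worse
than `t`, so `x t` is its unique first-period maximum.
-/

def maxSet {X : Type} (S : Set X) (pref : X → X → Prop) : Set X :=
  {x | x ∈ S ∧ ∀ y ∈ S, pref x y}

def WeakOrder {X : Type} (pref : X → X → Prop) : Prop :=
  (∀ a b, pref a b ∨ pref b a) ∧ Transitive pref

def sec1 {X₁ X₂ : Type} (B : Set (X₁ × X₂)) (a : X₁) : Set (X₁ × X₂) :=
  {y ∈ B | y.1 = a}

def sec2 {X₁ X₂ : Type} (B : Set (X₁ × X₂)) (b : X₂) : Set (X₁ × X₂) :=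
  {y ∈ B | y.2 = b}

def NSARP {K X₁ X₂ : Type} (x : K → X₁ × X₂) (B : K → Set (X₁ × X₂)) : Prop :=
  ¬ ∃ (L : ℕ) (k : Fin (L + 1) → K), ∀ l : Fin (L + 1),
      x (k l) ≠ x (k (l + 1)) ∧ x (k l) ∈ sec1 (B (k (l + 1))) (x (k (l + 1))).1

def NNSARP {K X₁ X₂ : Type} (x : K → X₁ × X₂) (B : K → Set (X₁ × X₂)) : Prop :=
  ¬ ∃ (L : ℕ) (k : Fin (L + 1) → K), ∀ l : Fin (L + 1),
      x (k l) ≠ x (k (l + 1)) ∧ x (k l) ∈ sec2 (B (k (l + 1))) (x (k (l + 1))).2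

def Cond1 {K X₁ X₂ : Type} (x : K → X₁ × X₂) (B : K → Set (X₁ × X₂)) : Prop :=
  ∀ S : Set K, S.Nonempty →
    ¬ (⋃ k ∈ S, sec1 (B k) (x k).1) ⊆ ⋃ k ∈ S, (B k \ sec1 (B k) (x k).1)

def Cond2 {K X₁ X₂ : Type} (x : K → X₁ × X₂) (B : K → Set (X₁ × X₂)) : Prop :=
  ¬ ∃ (L : ℕ) (k : Fin (L + 1) → K), ∀ l : Fin (L + 1),
      x (k l) ≠ x (k (l + 1)) ∧ x (k l) ∈ sec1 (B (k (l + 1))) (x (k l)).1 ∧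
      sec1 (B (k (l + 1))) (x (k l)).1 ⊆ sec1 (B (k l)) (x (k l)).1

def NaiveRat {K X₁ X₂ : Type} (x : K → X₁ × X₂) (B : K → Set (X₁ × X₂)) : Prop :=
  ∃ p1 p2 : X₁ × X₂ → X₁ × X₂ → Prop, WeakOrder p1 ∧ WeakOrder p2 ∧
    ∀ k, (∃ z, maxSet (B k) p1 = {z} ∧ z ∈ sec1 (B k) (x k).1) ∧
      maxSet (sec1 (B k) (x k).1) p2 = {x k}

def NaiveNashRat {K X₁ X₂ : Type} (x : K → X₁ × X₂) (B : K → Set (X₁ × X₂)) : Prop :=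
  ∃ p1 p2 : X₁ × X₂ → X₁ × X₂ → Prop, WeakOrder p1 ∧ WeakOrder p2 ∧
    ∀ k, x k ∈ maxSet (sec2 (B k) (x k).2) p1 ∧
      maxSet (sec1 (B k) (x k).1) p2 = {x k}

def StrictNaiveNashRat {K X₁ X₂ : Type} (x : K → X₁ × X₂) (B : K → Set (X₁ × X₂)) : Prop :=
  ∃ p1 p2 : X₁ × X₂ → X₁ × X₂ → Prop, WeakOrder p1 ∧ WeakOrder p2 ∧
    ∀ k, maxSet (sec2 (B k) (x k).2) p1 = {x k} ∧
      maxSet (sec1 (B k) (x k).1) p2 = {x k}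

def SophRat {K X₁ X₂ : Type} (x : K → X₁ × X₂) (B : K → Set (X₁ × X₂)) : Prop :=
  ∃ p1 p2 : X₁ × X₂ → X₁ × X₂ → Prop, WeakOrder p1 ∧ WeakOrder p2 ∧
    ∀ k, maxSet (⋃ a ∈ Prod.fst '' B k, maxSet (sec1 (B k) a) p2) p1 = {x k}

open Relation

universe u

section Cycles

variable {α : Type u} {R : α → α → Prop}

theorem Relation.TransGen.exists_nat_path {a b : α} (h : TransGen R a b) :
    ∃ (n : ℕ) (g : ℕ → α), g 0 = a ∧ g (n + 1) = b ∧ ∀ i ≤ n, R (g i) (g (i + 1)) := by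
  induction h using TransGen.head_induction_on with
  | @single a hab => exact ⟨0, fun i => if i = 0 then a else b, by simp, by simp, by simpa⟩
  | @head a c hac _ ih =>
    obtain ⟨n, g, rfl, rfl, hg⟩ := ih
    refine ⟨n + 1, fun i => if i = 0 then a else g (i - 1), by simp, by simp, ?_⟩
    rintro (_ | i) hi
    · simpa using hac
    · simpa using hg i (by omega)

open Fin.NatCast in
/-- `l + 1` wraps around in `Fin (L + 1)`, so the left side asks for a closed cycle. -/
theorem exists_fin_cycle_iff_exists_transGen_self :
    (∃ (L : ℕ) (k : Fin (L + 1) → α), ∀ l, R (k l) (k (l + 1))) ↔ ∃ a, TransGen R a a := by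
  constructor
  · rintro ⟨L, k, hk⟩
    have path : ∀ i : ℕ, TransGen R (k 0) (k ((i : Fin (L + 1)) + 1)) := by
      intro i
      induction i with
      | zero => simpa using TransGen.single (hk 0)
      | succ i ih => simpa [Nat.cast_succ] using ih.tail (hk _)
    refine ⟨k 0, ?_⟩
    simpa [← Nat.cast_succ, Fin.natCast_self] using path L
  · rintro ⟨a, ha⟩
    obtain ⟨n, g, hg0, hgn, hg⟩ := ha.exists_nat_path
    refine ⟨n, fun l => g l, fun l => ?_⟩
    show R (g l) (g (l + 1 : Fin (n + 1)))
    rw [Fin.val_add_one]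
    split_ifs with hl
    · subst hl
      simpa [hg0, ← hgn] using hg n le_rfl
    · exact hg l (Nat.lt_succ_iff.mp l.isLt)

theorem exists_linearOrder_extension_of_transGen_irrefl (h : ∀ a, ¬ TransGen R a a) :
    ∃ (β : Type u) (_ : LinearOrder β) (f : α → β), ∀ a b, R a b → f a < f b := by
  let _ : PartialOrder α :=
    { le := ReflTransGen R
      le_refl := fun _ => ReflTransGen.refl
      le_trans := fun _ _ _ => ReflTransGen.trans
      le_antisymm := fun a b hab hba => by
        rcases reflTransGen_iff_eq_or_transGen.mp hab with rfl | hab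
        · rfl
        · exact (h a (hab.trans_left hba)).elim }
  refine ⟨LinearExtension α, inferInstance, toLinearExtension, fun a b hab => ?_⟩
  refine lt_of_le_of_ne (toLinearExtension.monotone (ReflTransGen.single hab)) fun heq => ?_
  exact h a (by simpa [show a = b from heq] using TransGen.single hab)

end Cycles

section WeakOrders

variable {X : Type}

theorem weakOrder_of_utility {β : Type*} [LinearOrder β] (u : X → β) :
    WeakOrder fun y z => u z ≤ u y :=
  ⟨fun y z => le_total (u z) (u y), fun _ _ _ hyz hzw => hzw.trans hyz⟩

theorem maxSet_utility_eq_singleton {β : Type*} [LinearOrder β] {u : X → β} {S : Set X} {a : X}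
    (ha : a ∈ S) (hlt : ∀ y ∈ S, y ≠ a → u y < u a) :
    maxSet S (fun y z => u z ≤ u y) = {a} := by
  ext y
  refine ⟨fun hy => by_contra fun hne => (hlt y hy.1 hne).not_ge (hy.2 a ha), ?_⟩
  rintro rfl
  exact ⟨ha, fun z hz => (eq_or_ne z y).elim (fun h => h ▸ le_rfl) fun h => (hlt z hz h).le⟩

theorem mem_maxSet_of_subset {p : X → X → Prop} {S T : Set X} {a : X} (ha : a ∈ S)
    (hST : S ⊆ T) (hT : a ∈ maxSet T p) : a ∈ maxSet S p :=
  ⟨ha, fun y hy => hT.2 y (hST hy)⟩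

theorem strictPref_of_transGen {K : Type*} {p : X → X → Prop}
    (hp : ∀ ⦃a b c⦄, p a b → p b c → p a c) {f : K → X} {R : K → K → Prop}
    (hR : ∀ s t, R s t → p (f t) (f s) ∧ ¬ p (f s) (f t)) {s t : K}
    (h : TransGen R s t) : p (f t) (f s) ∧ ¬ p (f s) (f t) := by
  induction h with
  | single hst => exact hR _ _ hst
  | @tail b c _ hbc ih =>
    have hcb := (hR b c hbc).1
    exact ⟨hp hcb ih.1, fun hsc => ih.2 (hp hsc hcb)⟩

end WeakOrders

section Rationalizability

variable {K X₁ X₂ : Type}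

def sophMenu (B : Set (X₁ × X₂)) (p2 : X₁ × X₂ → X₁ × X₂ → Prop) : Set (X₁ × X₂) :=
  ⋃ a ∈ Prod.fst '' B, maxSet (sec1 B a) p2

theorem mem_sophMenu {B : Set (X₁ × X₂)} {p2 : X₁ × X₂ → X₁ × X₂ → Prop} {y : X₁ × X₂} :
    y ∈ sophMenu B p2 ↔ y ∈ maxSet (sec1 B y.1) p2 := by
  simp only [sophMenu, Set.mem_iUnion, Set.mem_image, exists_prop]
  constructor
  · rintro ⟨a, -, hy⟩
    rwa [hy.1.2]
  · exact fun hy => ⟨y.1, ⟨y, hy.1.1, rfl⟩, hy⟩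

theorem sophRat_iff (x : K → X₁ × X₂) (B : K → Set (X₁ × X₂)) :
    SophRat x B ↔ ∃ p1 p2 : X₁ × X₂ → X₁ × X₂ → Prop, WeakOrder p1 ∧ WeakOrder p2 ∧
      ∀ k, maxSet (sophMenu (B k) p2) p1 = {x k} :=
  Iff.rfl

def RevealedWorse (x : K → X₁ × X₂) (B : K → Set (X₁ × X₂)) (s t : K) : Prop :=
  x s ≠ x t ∧ x s ∈ sec1 (B t) (x s).1 ∧ sec1 (B t) (x s).1 ⊆ sec1 (B s) (x s).1

theorem cond2_iff (x : K → X₁ × X₂) (B : K → Set (X₁ × X₂)) :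
    Cond2 x B ↔ ∀ s, ¬ TransGen (RevealedWorse x B) s s := by
  rw [← not_exists, ← exists_fin_cycle_iff_exists_transGen_self]
  rfl

theorem RevealedWorse.strictPref {x : K → X₁ × X₂} {B : K → Set (X₁ × X₂)}
    {p1 p2 : X₁ × X₂ → X₁ × X₂ → Prop} (hp1 : ∀ ⦃a b c⦄, p1 a b → p1 b c → p1 a c)
    (hmax : ∀ k, maxSet (sophMenu (B k) p2) p1 = {x k}) {s t : K}
    (h : RevealedWorse x B s t) : p1 (x t) (x s) ∧ ¬ p1 (x s) (x t) := by
  obtain ⟨hne, hmem, hsub⟩ := h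
  have hmax_of : ∀ k, x k ∈ maxSet (sophMenu (B k) p2) p1 := fun k => (hmax k).symm ▸ rfl
  have hs_menu : x s ∈ sophMenu (B t) p2 :=
    mem_sophMenu.mpr (mem_maxSet_of_subset hmem hsub (mem_sophMenu.mp (hmax_of s).1))
  refine ⟨(hmax_of t).2 _ hs_menu, fun hst => hne ?_⟩
  have : x s ∈ maxSet (sophMenu (B t) p2) p1 :=
    ⟨hs_menu, fun y hy => hp1 hst ((hmax_of t).2 y hy)⟩
  rwa [hmax t] at this

theorem cond2_of_sophRat {x : K → X₁ × X₂} {B : K → Set (X₁ × X₂)} (h : SophRat x B) :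
    Cond2 x B := by
  obtain ⟨p1, p2, ⟨-, hp1⟩, -, hmax⟩ := (sophRat_iff x B).mp h
  refine (cond2_iff x B).mpr fun s hs => ?_
  have hstrict :=
    strictPref_of_transGen hp1 (fun _ _ hst => RevealedWorse.strictPref hp1 hmax hst) hs
  exact hstrict.2 hstrict.1

theorem sophRat_of_cond2 {x : K → X₁ × X₂} {B : K → Set (X₁ × X₂)} (hmem : ∀ k, x k ∈ B k)
    (hdist : ∀ k s : K, k ≠ s → (x k).1 ≠ (x s).1) (h : Cond2 x B) : SophRat x B := by
  obtain ⟨β, _, u, hu⟩ := exists_linearOrder_extension_of_transGen_irrefl ((cond2_iff x B).mp h)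
  have hinj : Function.Injective x := fun s t hst =>
    by_contra fun hne => hdist s t hne (congrArg Prod.fst hst)
  let own : Set (X₁ × X₂) := ⋃ s, sec1 (B s) (x s).1
  have hx_own (t : K) : x t ∈ own := Set.mem_iUnion.mpr ⟨t, hmem t, rfl⟩
  let p2 : X₁ × X₂ → X₁ × X₂ → Prop := fun y z => (z ∉ own) ≤ (y ∉ own)
  let v : X₁ × X₂ → WithBot β := Function.extend x (fun t => (u t : WithBot β)) ⊥
  have hv (t : K) : v (x t) = u t := hinj.extend_apply _ _ t
  have hsub (s t : K) (hs : x s ∈ sophMenu (B t) p2) :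
      sec1 (B t) (x s).1 ⊆ sec1 (B s) (x s).1 := by
    intro z hz
    have hz_own : z ∈ own := by_contra fun hz' => (mem_sophMenu.mp hs).2 z hz hz' (hx_own s)
    obtain ⟨r, hr⟩ := Set.mem_iUnion.mp hz_own
    obtain rfl : r = s := by_contra fun hne => hdist r s hne (hr.2.symm.trans hz.2)
    exact hr
  refine (sophRat_iff x B).mpr
    ⟨_, p2, weakOrder_of_utility v, weakOrder_of_utility fun y => y ∉ own, fun k => ?_⟩
  refine maxSet_utility_eq_singleton
    (mem_sophMenu.mpr ⟨⟨hmem k, rfl⟩, fun y hy hy' => (hy' (Set.mem_iUnion.mpr ⟨k, hy⟩)).elim⟩)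
    fun y hy hne => ?_
  by_cases hy_obs : ∃ s, x s = y
  · obtain ⟨s, rfl⟩ := hy_obs
    rw [hv, hv, WithBot.coe_lt_coe]
    exact hu s k ⟨hne, (mem_sophMenu.mp hy).1, hsub s k hy⟩
  · have hv_bot : v y = ⊥ := Function.extend_apply' _ _ _ hy_obs
    rw [hv_bot, hv]
    exact WithBot.bot_lt_coe _

end Rationalizability

theorem sophisticated_rationalizable_iff_Cond2_of_distinct_general
    {K X₁ X₂ : Type}
    (x : K → X₁ × X₂) (B : K → Set (X₁ × X₂)) (hmem : ∀ k, x k ∈ B k)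
    (hdist : ∀ k s : K, k ≠ s → (x k).1 ≠ (x s).1) :
    SophRat x B ↔ Cond2 x B :=
  ⟨cond2_of_sophRat, sophRat_of_cond2 hmem hdist⟩

theorem sophisticated_rationalizable_iff_Cond2_of_distinct
    {K X₁ X₂ : Type} [Fintype K]
    (x : K → X₁ × X₂) (B : K → Set (X₁ × X₂)) (hmem : ∀ k, x k ∈ B k)
    (hdist : ∀ k s : K, k ≠ s → (x k).1 ≠ (x s).1) :
    SophRat x B ↔ Cond2 x B :=
  sophisticated_rationalizable_iff_Cond2_of_distinct_general x B hmem hdist
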